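/- arXiv:1905.01840 — 6 statements merged into one kernel-verified Lean document; each statement's English description precedes it below -/
import Mathlib

section
/- Let v ∈ ℝ^n with ‖v‖_2 ≤ 1 satisfy V_-(v) ≤ (v_1 - v_n) + γ for some γ ≥ 0 (i.e., condition with sign w = 1). Write v = v^+ - v^- with v^+_1 = 0, v^+_i = Σ_{j=2}^i (v_j - v_{j-1})_+ and v^-_i = -v_1 + Σ_{j=2}^i (v_{j-1} - v_j)_+. Then v^+_n ≤ γ, ‖v^+‖_2 ≤ γ√(n-1), and ‖v^-‖_2 ≤ 1 + γ√(n-1). -/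
/-! Telescoping gives `v⁺ - v⁻ = v`; at index `n - 1` this reads `v⁺ (n-1) = V₋(v) - (v 0 - v (n-1))`,
so the hypothesis is exactly `v⁺ (n-1) ≤ γ`. Since `v⁺` is nondecreasing with `v⁺ 0 = 0`, each of its
`n - 1` remaining entries lies in `[0, γ]`, and `‖v⁻‖ = ‖v⁺ - v‖ ≤ ‖v⁺‖ + ‖v‖` by the triangle
inequality. -/

open Finset

theorem sum_range_max_sub_zero_eq (a : ℕ → ℝ) (i : ℕ) :
    ∑ j ∈ range i, max (a (j + 1) - a j) 0
      = ∑ j ∈ range i, max (a j - a (j + 1)) 0 + (a i - a 0) := by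
  rw [← sum_range_sub a, ← sum_add_distrib]
  refine sum_congr rfl fun j _ => ?_
  rw [← neg_sub (a (j + 1)) (a j)]
  linarith [max_zero_sub_max_neg_zero_eq_self (a (j + 1) - a j)]

theorem sqrt_sum_sq_sub_le {ι : Type*} (s : Finset ι) (f g : ι → ℝ) :
    √(∑ i ∈ s, (f i - g i) ^ 2) ≤ √(∑ i ∈ s, f i ^ 2) + √(∑ i ∈ s, g i ^ 2) := by
  have norm_eq (h : ι → ℝ) : ‖WithLp.toLp 2 (fun i : s => h i)‖ = √(∑ i ∈ s, h i ^ 2) := by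
    rw [EuclideanSpace.norm_eq, ← sum_coe_sort s]
    simp only [Real.norm_eq_abs, sq_abs]
  rw [← norm_eq, ← norm_eq, ← norm_eq]
  exact norm_sub_le (WithLp.toLp 2 (fun i : s => f i)) (WithLp.toLp 2 (fun i : s => g i))

theorem sqrt_sum_range_sq_le_mul_sqrt {f : ℕ → ℝ} {c : ℝ} {n : ℕ} (h0 : f 0 = 0)
    (hf : ∀ i < n, |f i| ≤ c) : √(∑ i ∈ range n, f i ^ 2) ≤ c * √((n : ℝ) - 1) := by
  rcases n with _ | m
  · simp [Real.sqrt_eq_zero_of_nonpos]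
  have hc : 0 ≤ c := by simpa [h0] using hf 0 m.succ_pos
  have hsum : ∑ i ∈ range (m + 1), f i ^ 2 ≤ m * c ^ 2 := by
    rw [sum_range_succ', h0, zero_pow two_ne_zero, add_zero]
    calc ∑ i ∈ range m, f (i + 1) ^ 2 ≤ ∑ _i ∈ range m, c ^ 2 :=
          sum_le_sum fun i hi => by
            simpa only [sq_abs] using
              pow_le_pow_left₀ (abs_nonneg _) (hf (i + 1) (by simpa using hi)) 2
      _ = m * c ^ 2 := by simp
  calc √(∑ i ∈ range (m + 1), f i ^ 2) ≤ √(m * c ^ 2) := Real.sqrt_le_sqrt hsum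
    _ = c * √(((m + 1 : ℕ) : ℝ) - 1) := by
      rw [Real.sqrt_mul (Nat.cast_nonneg m), Real.sqrt_sq hc]
      push_cast
      ring_nf

theorem stmt_4_general (n : ℕ) (v vp vm : ℕ → ℝ) (γ : ℝ)
    (hnorm : Real.sqrt (∑ i ∈ Finset.range n, (v i) ^ 2) ≤ 1)
    (hcond : ∑ i ∈ Finset.range (n - 1), max (v i - v (i + 1)) 0 ≤ (v 0 - v (n - 1)) + γ)
    (hvp : ∀ i, vp i = ∑ j ∈ Finset.range i, max (v (j + 1) - v j) 0)
    (hvm : ∀ i, vm i = -v 0 + ∑ j ∈ Finset.range i, max (v j - v (j + 1)) 0) :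
    vp (n - 1) ≤ γ ∧
    Real.sqrt (∑ i ∈ Finset.range n, (vp i) ^ 2) ≤ γ * Real.sqrt ((n : ℝ) - 1) ∧
    Real.sqrt (∑ i ∈ Finset.range n, (vm i) ^ 2) ≤ 1 + γ * Real.sqrt ((n : ℝ) - 1) := by
  have hvm_eq (i : ℕ) : vm i = vp i - v i := by
    rw [hvm, hvp, sum_range_max_sub_zero_eq]; ring
  have hlast : vp (n - 1) ≤ γ := by
    rw [hvp, sum_range_max_sub_zero_eq]; linarith
  have hvp0 : vp 0 = 0 := by simp [hvp]
  have hmono : Monotone vp := by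
    intro i k hik
    rw [hvp, hvp]
    exact sum_le_sum_of_subset_of_nonneg (range_subset_range.2 hik)
      fun j _ _ => le_max_right _ _
  have hvp_bound : ∀ i < n, |vp i| ≤ γ := by
    intro i hi
    rw [abs_of_nonneg (hvp0 ▸ hmono i.zero_le)]
    exact (hmono (by omega)).trans hlast
  have hvp_norm := sqrt_sum_range_sq_le_mul_sqrt hvp0 hvp_bound
  refine ⟨hlast, hvp_norm, ?_⟩
  simp only [hvm_eq]
  linarith [sqrt_sum_sq_sub_le (range n) vp v]

/-- If `‖v‖₂ ≤ 1` and `V₋(v) ≤ (v 0 - v (n-1)) + γ` with `γ ≥ 0`, then writing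
`v = v⁺ - v⁻` (with `v⁺ i = ∑_{j<i}(v (j+1) - v j)₊` and
`v⁻ i = -v 0 + ∑_{j<i}(v j - v (j+1))₊`) we have `v⁺ (n-1) ≤ γ`,
`‖v⁺‖₂ ≤ γ √(n-1)` and `‖v⁻‖₂ ≤ 1 + γ √(n-1)`. -/
theorem stmt_4 (n : ℕ) (hn : 2 ≤ n) (v vp vm : ℕ → ℝ) (γ : ℝ) (hγ : 0 ≤ γ)
    (hnorm : Real.sqrt (∑ i ∈ Finset.range n, (v i) ^ 2) ≤ 1)
    (hcond : ∑ i ∈ Finset.range (n - 1), max (v i - v (i + 1)) 0 ≤ (v 0 - v (n - 1)) + γ)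
    (hvp : ∀ i, vp i = ∑ j ∈ Finset.range i, max (v (j + 1) - v j) 0)
    (hvm : ∀ i, vm i = -v 0 + ∑ j ∈ Finset.range i, max (v j - v (j + 1)) 0) :
    vp (n - 1) ≤ γ ∧
    Real.sqrt (∑ i ∈ Finset.range n, (vp i) ^ 2) ≤ γ * Real.sqrt ((n : ℝ) - 1) ∧
    Real.sqrt (∑ i ∈ Finset.range n, (vm i) ^ 2) ≤ 1 + γ * Real.sqrt ((n : ℝ) - 1) :=
  stmt_4_general n v vp vm γ hnorm hcond hvp hvm
end

section
/- Let f : ℝ^n → ℝ be convex, λ ≥ 0, σ > 0, and y ∈ ℝ^n. Let θ̂ be the unique minimizer of θ ↦ (1/2)‖y - θ‖_2² + σλ f(θ). Then for any θ ∈ ℝ^n and any subgradient v ∈ ∂f(θ), writing y = θ* + σz, the deterministic inequality ‖θ̂ - θ*‖_2² - ‖θ - θ*‖_2² ≤ σ² ‖λv - z‖_2² holds; consequently ‖θ̂ - θ*‖_2² - ‖θ - θ*‖_2² ≤ σ² dist²(z, λ ∂f(θ)). -/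
/-!
First-order optimality of the proximal point `θ̂` says that `y - θ̂ - σλ v` makes an obtuse angle
with `θ - θ̂` for every subgradient `v ∈ ∂f(θ)`. Writing `a = θ̂ - θ*`, `b = θ - θ*` and
`w = σ (z - λ v)`, this is `⟪a - w, a - b⟫ ≤ 0`, and expanding `‖(a - b) - w‖² ≥ 0` turns it into
`‖a‖² - ‖b‖² ≤ ‖w‖²`. Taking the infimum over `v` gives the bound by the distance to `λ ∂f(θ)`.
-/

open Set Filter Topology Metric RealInnerProductSpace

theorem nonpos_of_forall_le_mul {a b : ℝ} (h : ∀ t ∈ Ioc (0 : ℝ) 1, a ≤ t * b) : a ≤ 0 := by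
  have hlim : Tendsto (fun t : ℝ => t * b) (𝓝[>] 0) (𝓝 0) := by
    simpa using ((continuous_mul_const b).tendsto 0).mono_left nhdsWithin_le_nhds
  exact ge_of_tendsto hlim (eventually_of_mem (Ioc_mem_nhdsGT one_pos) h)

section InnerProductSpace

variable {E : Type*} [NormedAddCommGroup E] [InnerProductSpace ℝ E]

theorem inner_sub_le_of_forall_prox_le {g : E → ℝ} (hg : ConvexOn ℝ univ g) {y x₀ : E}
    (hmin : ∀ x, 1 / 2 * ‖y - x₀‖ ^ 2 + g x₀ ≤ 1 / 2 * ‖y - x‖ ^ 2 + g x) (x : E) :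
    ⟪y - x₀, x - x₀⟫ ≤ g x - g x₀ := by
  -- compare `x₀` with `(1 - t) x₀ + t x` and let `t → 0⁺`
  refine sub_nonpos.mp (nonpos_of_forall_le_mul (b := ‖x - x₀‖ ^ 2 / 2) fun t ⟨ht0, ht1⟩ => ?_)
  have hconv : g ((1 - t) • x₀ + t • x) ≤ (1 - t) * g x₀ + t * g x :=
    hg.2 (mem_univ x₀) (mem_univ x) (sub_nonneg.2 ht1) ht0.le (sub_add_cancel 1 t)
  have hm := hmin ((1 - t) • x₀ + t • x)
  rw [show y - ((1 - t) • x₀ + t • x) = (y - x₀) - t • (x - x₀) by module,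
    norm_sub_sq_real (y - x₀), real_inner_smul_right, norm_smul, Real.norm_of_nonneg ht0.le] at hm
  have : t * (⟪y - x₀, x - x₀⟫ - (g x - g x₀)) ≤ t * (t * (‖x - x₀‖ ^ 2 / 2)) := by
    linarith
  exact le_of_mul_le_mul_left this ht0

theorem sq_norm_sub_sq_norm_le_of_inner_nonpos {a b w : E} (h : ⟪a - w, a - b⟫ ≤ 0) :
    ‖a‖ ^ 2 - ‖b‖ ^ 2 ≤ ‖w‖ ^ 2 := by
  rw [inner_sub_left] at h
  have hsq := norm_sub_sq_real (a - b) w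
  calc ‖a‖ ^ 2 - ‖b‖ ^ 2 = 2 * ⟪a, a - b⟫ - ‖a - b‖ ^ 2 := by
        rw [norm_sub_sq_real, inner_sub_right, real_inner_self_eq_norm_sq, real_inner_comm]; ring
    _ ≤ ‖w‖ ^ 2 := by
        rw [real_inner_comm] at hsq
        linarith [sq_nonneg ‖a - b - w‖]

theorem sq_norm_prox_sub_le {f : E → ℝ} (hf : ConvexOn ℝ univ f) {lam σ : ℝ}
    (hσlam : 0 ≤ σ * lam) {y θstar z θhat θ s : E} (hy : y = θstar + σ • z)
    (hmin : ∀ x, 1 / 2 * ‖y - θhat‖ ^ 2 + σ * lam * f θhat ≤ 1 / 2 * ‖y - x‖ ^ 2 + σ * lam * f x)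
    (hs : ∀ x, f θ + ⟪s, x - θ⟫ ≤ f x) :
    ‖θhat - θstar‖ ^ 2 - ‖θ - θstar‖ ^ 2 ≤ σ ^ 2 * ‖lam • s - z‖ ^ 2 := by
  have hopt : ⟪y - θhat, θ - θhat⟫ ≤ σ * lam * (f θ - f θhat) :=
    (inner_sub_le_of_forall_prox_le (hf.smul hσlam) hmin θ).trans_eq (mul_sub _ _ _).symm
  have hsub : ⟪s, θhat - θ⟫ ≤ f θhat - f θ := by linarith [hs θhat]
  have hangle : ⟪(θhat - θstar) - σ • (z - lam • s), (θhat - θstar) - (θ - θstar)⟫ ≤ 0 := by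
    rw [show (θhat - θstar) - σ • (z - lam • s) = (σ * lam) • s - (y - θhat) by rw [hy]; module,
      sub_sub_sub_cancel_right, inner_sub_left, real_inner_smul_left]
    have hflip : ⟪y - θhat, θhat - θ⟫ = -⟪y - θhat, θ - θhat⟫ := by
      rw [← inner_neg_right, neg_sub]
    linarith [mul_le_mul_of_nonneg_left hsub hσlam]
  calc ‖θhat - θstar‖ ^ 2 - ‖θ - θstar‖ ^ 2 ≤ ‖σ • (z - lam • s)‖ ^ 2 :=
        sq_norm_sub_sq_norm_le_of_inner_nonpos hangle
    _ = σ ^ 2 * ‖lam • s - z‖ ^ 2 := by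
        rw [norm_smul, mul_pow, Real.norm_eq_abs, sq_abs, norm_sub_rev]

end InnerProductSpace

theorem le_mul_infDist_sq {α : Type*} [PseudoMetricSpace α] {z : α} {S : Set α}
    (hS : S.Nonempty) {c L : ℝ} (hc : 0 ≤ c) (h : ∀ u ∈ S, L ≤ c * dist z u ^ 2) :
    L ≤ c * infDist z S ^ 2 := by
  rcases hc.eq_or_lt with rfl | hc
  · obtain ⟨u, hu⟩ := hS
    simpa using h u hu
  have hroot : √(L / c) ≤ infDist z S := (le_infDist hS).2 fun u hu =>
    Real.sqrt_le_iff.2 ⟨dist_nonneg, (div_le_iff₀' hc).2 (h u hu)⟩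
  exact (div_le_iff₀' hc).1 (Real.sqrt_le_iff.1 hroot).2

/-- Let `f : ℝ^n → ℝ` be convex, `λ ≥ 0`, `σ > 0`, and let `θ̂` minimize
`θ ↦ ½‖y - θ‖² + σ λ f(θ)`.  Then for any `θ` and any subgradient
`v ∈ ∂f(θ)`, writing `y = θ* + σ z`, we have the deterministic inequality
`‖θ̂ - θ*‖² - ‖θ - θ*‖² ≤ σ² ‖λ v - z‖²`, and consequently
`‖θ̂ - θ*‖² - ‖θ - θ*‖² ≤ σ² dist²(z, λ ∂f(θ))`. -/
theorem stmt_10 (n : ℕ) (f : EuclideanSpace ℝ (Fin n) → ℝ)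
    (hf : ConvexOn ℝ Set.univ f) (lam σ : ℝ) (hlam : 0 ≤ lam) (hσ : 0 < σ)
    (y θstar z θhat θ v : EuclideanSpace ℝ (Fin n))
    (hy : y = θstar + σ • z)
    (hmin : ∀ x, (1 / 2) * ‖y - θhat‖ ^ 2 + σ * lam * f θhat ≤
      (1 / 2) * ‖y - x‖ ^ 2 + σ * lam * f x)
    (hv : ∀ x, f θ + (inner ℝ v (x - θ) : ℝ) ≤ f x) :
    ‖θhat - θstar‖ ^ 2 - ‖θ - θstar‖ ^ 2 ≤ σ ^ 2 * ‖lam • v - z‖ ^ 2 ∧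
    ‖θhat - θstar‖ ^ 2 - ‖θ - θstar‖ ^ 2 ≤
      σ ^ 2 * (Metric.infDist z
        {u : EuclideanSpace ℝ (Fin n) |
          ∃ s, (∀ x, f θ + (inner ℝ s (x - θ) : ℝ) ≤ f x) ∧ u = lam • s}) ^ 2 := by
  have hσlam : 0 ≤ σ * lam := mul_nonneg hσ.le hlam
  refine ⟨sq_norm_prox_sub_le hf hσlam hy hmin hv, le_mul_infDist_sq ?_ (sq_nonneg σ) ?_⟩
  · exact ⟨lam • v, v, hv, rfl⟩
  rintro _ ⟨s, hs, rfl⟩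
  rw [dist_comm, dist_eq_norm]
  exact sq_norm_prox_sub_le hf hσlam hy hmin hs
end

section
/- Let K ⊆ ℝ^n be a closed convex set, θ ∈ ℝ^n with V_-(θ) = V, and let K_-(V) := {z ∈ ℝ^n : V_-(z) ≤ V}. Let Π = (B_1, …, B_{k'}) be a connected partition refining the constant partition of θ, with pieces B_i = {τ_i, …, τ_{i+1}-1}, and signs w_i ∈ {0,1} satisfying w_i = 1 if θ_{τ_i - 1} > θ_{τ_i}, w_i = 0 if θ_{τ_i - 1} < θ_{τ_i} (arbitrary if equal). Then the tangent cone of K_-(V) at θ is contained in T(Π, w) := {v ∈ ℝ^n : Σ_{i=1}^{k'} V_-^{B_i}(v_{B_i}) ≤ Σ_{i=2}^{k'} w_i (v_{τ_i} - v_{τ_i - 1})}. -/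
/-!
On each piece of the partition `θ` is constant, so there the lower variation of `v = z - θ`
is that of `z`. Hence the lower variation of `z` splits into its variation inside the pieces
plus its drops across the breakpoints, while that of `θ` consists of the drops across the
breakpoints alone. Subtracting, the constraint `V₋(z) ≤ V₋(θ)` bounds the in-piece variation of
`v` by the sum over breakpoints of the loss in drop, and each such loss is at most
`w i (v (τ i) - v (τ i - 1))` by the choice of signs. Both sides are positively homogeneous
and continuous in `v`, so the bound passes to the closed cone generated by `K₋(V) - θ`.
-/

open Finset

/-- `V₋^s(v)`: the lower total variation of `v` along the steps `j → j + 1` with `j ∈ s`. -/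
def lowerVariation (s : Finset ℕ) (v : ℕ → ℝ) : ℝ :=
  ∑ j ∈ s, max (v j - v (j + 1)) 0

lemma lowerVariation_smul {t : ℝ} (ht : 0 ≤ t) (s : Finset ℕ) (v : ℕ → ℝ) :
    lowerVariation s (t • v) = t * lowerVariation s v := by
  simp only [lowerVariation, mul_sum, Pi.smul_apply, smul_eq_mul, ← mul_sub,
    mul_max_of_nonneg _ _ ht, mul_zero]

lemma continuous_lowerVariation (s : Finset ℕ) : Continuous (lowerVariation s) :=
  continuous_finsetSum _ fun j _ =>
    ((continuous_apply j).sub (continuous_apply (j + 1))).max continuous_const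

lemma lowerVariation_sub_of_forall_eq {s : Finset ℕ} {θ : ℕ → ℝ}
    (hθ : ∀ j ∈ s, θ j = θ (j + 1)) (z : ℕ → ℝ) :
    lowerVariation s (z - θ) = lowerVariation s z :=
  sum_congr rfl fun j hj => by simp only [Pi.sub_apply, hθ j hj, sub_sub_sub_cancel_right]

lemma lowerVariation_eq_zero_of_forall_eq {s : Finset ℕ} {θ : ℕ → ℝ}
    (hθ : ∀ j ∈ s, θ j = θ (j + 1)) : lowerVariation s θ = 0 :=
  sum_eq_zero fun j hj => by simp [hθ j hj]

/-- The loss in the drop across one breakpoint is bounded by the signed jump of `z - θ`. -/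
lemma max_sub_max_le_mul_jump {a b c d w : ℝ} (hw : w = 0 ∨ w = 1)
    (hgt : a > b → w = 1) (hlt : a < b → w = 0) :
    max (a - b) 0 - max (c - d) 0 ≤ w * ((d - b) - (c - a)) := by
  rcases hw with rfl | rfl
  · have hab : a ≤ b := not_lt.mp fun h => zero_ne_one (hgt h)
    rw [max_eq_right (sub_nonpos.mpr hab)]
    linarith [le_max_right (c - d) 0]
  · have hba : b ≤ a := not_lt.mp fun h => one_ne_zero (hlt h)
    rw [max_eq_left (sub_nonneg.mpr hba)]
    linarith [le_max_left (c - d) 0]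

section Partition

variable {k : ℕ} {τ : ℕ → ℕ}

theorem sum_range_pred_eq_sum_pieces_add_sum_breaks {M : Type*} [AddCommMonoid M]
    (f : ℕ → M) (hk : 1 ≤ k) (hτ0 : τ 0 = 0) (hτ : ∀ i < k, τ i < τ (i + 1)) :
    ∑ j ∈ range (τ k - 1), f j
      = ∑ i ∈ range k, ∑ j ∈ Ico (τ i) (τ (i + 1) - 1), f j + ∑ i ∈ Ico 1 k, f (τ i - 1) := by
  induction k, hk using Nat.le_induction with
  | base => rw [sum_range_one, hτ0, zero_add, Ico_self, sum_empty, add_zero, range_eq_Ico]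
  | succ m hm ih =>
    have hτm : 1 ≤ τ m := by
      have := hτ (m - 1) (by omega)
      rw [Nat.sub_add_cancel hm] at this
      omega
    have hτm1 := hτ m (by omega)
    rw [sum_range_succ, sum_Ico_succ_top hm]
    calc ∑ j ∈ range (τ (m + 1) - 1), f j
        = ∑ j ∈ range (τ m - 1), f j + f (τ m - 1) + ∑ j ∈ Ico (τ m) (τ (m + 1) - 1), f j := by
          rw [← sum_range_succ, Nat.sub_add_cancel hτm, range_eq_Ico, range_eq_Ico,
            sum_Ico_consecutive _ (Nat.zero_le _) (by omega)]
      _ = _ := by rw [ih fun i hi => hτ i (by omega)]; abel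

lemma lowerVariation_range_eq (v : ℕ → ℝ) (hk : 1 ≤ k) (hτ0 : τ 0 = 0)
    (hτ : ∀ i < k, τ i < τ (i + 1)) :
    lowerVariation (range (τ k - 1)) v
      = ∑ i ∈ range k, lowerVariation (Ico (τ i) (τ (i + 1) - 1)) v
        + ∑ i ∈ Ico 1 k, max (v (τ i - 1) - v (τ i)) 0 := by
  rw [lowerVariation, sum_range_pred_eq_sum_pieces_add_sum_breaks _ hk hτ0 hτ]
  congr 1
  refine sum_congr rfl fun i hi => ?_
  obtain ⟨hi1, hik⟩ := mem_Ico.mp hi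
  have hτi := hτ (i - 1) (by omega)
  rw [Nat.sub_add_cancel hi1] at hτi
  rw [Nat.sub_add_cancel (by omega)]

/-- The set `T(Π, w)` for the partition with breakpoints `τ 0 < ⋯ < τ k`. -/
def partitionCone (k : ℕ) (τ : ℕ → ℕ) (w : ℕ → ℝ) : Set (ℕ → ℝ) :=
  {v | ∑ i ∈ range k, lowerVariation (Ico (τ i) (τ (i + 1) - 1)) v
      ≤ ∑ i ∈ Ico 1 k, w i * (v (τ i) - v (τ i - 1))}

variable {w : ℕ → ℝ}

lemma isClosed_partitionCone : IsClosed (partitionCone k τ w) :=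
  isClosed_le (continuous_finsetSum _ fun _ _ => continuous_lowerVariation _)
    (continuous_finsetSum _ fun i _ => continuous_const.mul
      ((continuous_apply (τ i)).sub (continuous_apply (τ i - 1))))

lemma smul_mem_partitionCone {t : ℝ} (ht : 0 ≤ t) {v : ℕ → ℝ} (hv : v ∈ partitionCone k τ w) :
    t • v ∈ partitionCone k τ w := by
  have hrhs : ∑ i ∈ Ico 1 k, w i * ((t • v) (τ i) - (t • v) (τ i - 1))
      = t * ∑ i ∈ Ico 1 k, w i * (v (τ i) - v (τ i - 1)) := by
    rw [mul_sum]
    exact sum_congr rfl fun i _ => by simp only [Pi.smul_apply, smul_eq_mul]; ring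
  simp only [partitionCone, Set.mem_ofPred_eq, lowerVariation_smul ht, ← mul_sum, hrhs] at hv ⊢
  exact mul_le_mul_of_nonneg_left hv ht

lemma sub_mem_partitionCone {θ z : ℕ → ℝ} (hk : 1 ≤ k) (hτ0 : τ 0 = 0)
    (hτ : ∀ i < k, τ i < τ (i + 1))
    (hconst : ∀ i < k, ∀ a, τ i ≤ a → a < τ (i + 1) → θ a = θ (τ i))
    (hw01 : ∀ i, w i = 0 ∨ w i = 1)
    (hwsgn : ∀ i, 1 ≤ i → i < k →
      (θ (τ i - 1) > θ (τ i) → w i = 1) ∧ (θ (τ i - 1) < θ (τ i) → w i = 0))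
    (hz : lowerVariation (range (τ k - 1)) z ≤ lowerVariation (range (τ k - 1)) θ) :
    z - θ ∈ partitionCone k τ w := by
  have hpiece : ∀ i ∈ range k, ∀ j ∈ Ico (τ i) (τ (i + 1) - 1), θ j = θ (j + 1) := by
    intro i hi j hj
    simp only [mem_range, mem_Ico] at hi hj
    rw [hconst i hi j hj.1 (by omega), hconst i hi (j + 1) (by omega) (by omega)]
  have hθ := lowerVariation_range_eq θ hk hτ0 hτ
  rw [sum_eq_zero fun i hi => lowerVariation_eq_zero_of_forall_eq (hpiece i hi), zero_add] at hθ
  have hbreaks : ∑ i ∈ Ico 1 k, (max (θ (τ i - 1) - θ (τ i)) 0 - max (z (τ i - 1) - z (τ i)) 0)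
      ≤ ∑ i ∈ Ico 1 k, w i * ((z - θ) (τ i) - (z - θ) (τ i - 1)) := by
    refine sum_le_sum fun i hi => ?_
    obtain ⟨h1, h2⟩ := mem_Ico.mp hi
    exact max_sub_max_le_mul_jump (hw01 i) (hwsgn i h1 h2).1 (hwsgn i h1 h2).2
  rw [sum_sub_distrib] at hbreaks
  show ∑ i ∈ range k, lowerVariation _ (z - θ) ≤ _
  rw [sum_congr rfl fun i hi => lowerVariation_sub_of_forall_eq (hpiece i hi) z]
  linarith [lowerVariation_range_eq z hk hτ0 hτ]

end Partition

theorem stmt_11_general (n k' : ℕ) (hk : 1 ≤ k') (θ : ℕ → ℝ) (V : ℝ)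
    (hV : ∑ i ∈ Finset.range (n - 1), max (θ i - θ (i + 1)) 0 = V)
    (τ : ℕ → ℕ) (hτ0 : τ 0 = 0) (hτk : τ k' = n) (hτmono : ∀ i < k', τ i < τ (i + 1))
    (hconst : ∀ i < k', ∀ a, τ i ≤ a → a < τ (i + 1) → θ a = θ (τ i))
    (w : ℕ → ℝ) (hw01 : ∀ i, w i = 0 ∨ w i = 1)
    (hwsgn : ∀ i, 1 ≤ i → i < k' →
      (θ (τ i - 1) > θ (τ i) → w i = 1) ∧ (θ (τ i - 1) < θ (τ i) → w i = 0)) :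
    closure {v : ℕ → ℝ | ∃ t : ℝ, 0 ≤ t ∧ ∃ z : ℕ → ℝ,
        (∑ i ∈ Finset.range (n - 1), max (z i - z (i + 1)) 0) ≤ V ∧ v = t • (z - θ)}
      ⊆ {v : ℕ → ℝ |
          ∑ i ∈ Finset.range k',
              ∑ j ∈ Finset.Ico (τ i) (τ (i + 1) - 1), max (v j - v (j + 1)) 0
            ≤ ∑ i ∈ Finset.Ico 1 k', w i * (v (τ i) - v (τ i - 1))} := by
  refine closure_minimal (t := partitionCone k' τ w) ?_ isClosed_partitionCone
  rintro _ ⟨t, ht, z, hz, rfl⟩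
  subst hV hτk
  exact smul_mem_partitionCone ht (sub_mem_partitionCone hk hτ0 hτmono hconst hw01 hwsgn hz)

/-- Let `θ ∈ ℝ^n` with lower total variation `V₋(θ) = V`, and let
`K₋(V) = {z : V₋(z) ≤ V}`.  Let `τ 0 = 0 < τ 1 < ⋯ < τ k' = n` be the
breakpoints of a connected partition refining the constant partition of `θ`
(i.e. `θ` is constant on each piece `B i = {τ i, …, τ (i+1) - 1}`), with signs
`w i ∈ {0,1}` such that `w i = 1` if `θ (τ i - 1) > θ (τ i)` and `w i = 0` if
`θ (τ i - 1) < θ (τ i)` (arbitrary if equal). Then the tangent cone of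
`K₋(V)` at `θ` (the closure of `{t (z - θ) : t ≥ 0, z ∈ K₋(V)}`) is contained
in `T(Π, w) = {v : ∑ᵢ V₋^{B i}(v) ≤ ∑_{i=1}^{k'-1} w i (v (τ i) - v (τ i - 1))}`. -/
theorem stmt_11 (n k' : ℕ) (hn : 1 ≤ n) (hk : 1 ≤ k') (θ : ℕ → ℝ) (V : ℝ)
    (hV : ∑ i ∈ Finset.range (n - 1), max (θ i - θ (i + 1)) 0 = V)
    (τ : ℕ → ℕ) (hτ0 : τ 0 = 0) (hτk : τ k' = n) (hτmono : ∀ i < k', τ i < τ (i + 1))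
    (hconst : ∀ i < k', ∀ a, τ i ≤ a → a < τ (i + 1) → θ a = θ (τ i))
    (w : ℕ → ℝ) (hw01 : ∀ i, w i = 0 ∨ w i = 1)
    (hwsgn : ∀ i, 1 ≤ i → i < k' →
      (θ (τ i - 1) > θ (τ i) → w i = 1) ∧ (θ (τ i - 1) < θ (τ i) → w i = 0)) :
    closure {v : ℕ → ℝ | ∃ t : ℝ, 0 ≤ t ∧ ∃ z : ℕ → ℝ,
        (∑ i ∈ Finset.range (n - 1), max (z i - z (i + 1)) 0) ≤ V ∧ v = t • (z - θ)}
      ⊆ {v : ℕ → ℝ |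
          ∑ i ∈ Finset.range k',
              ∑ j ∈ Finset.Ico (τ i) (τ (i + 1) - 1), max (v j - v (j + 1)) 0
            ≤ ∑ i ∈ Finset.Ico 1 k', w i * (v (τ i) - v (τ i - 1))} :=
  stmt_11_general n k' hk θ V hV τ hτ0 hτk hτmono hconst w hw01 hwsgn
end

section
/- Let θ ∈ ℝ^n with V_-(θ) = V and let Π = (B_1,…,B_k) be exactly the constant partition of θ with signs w as in the definition. Then the cone T(Π, w) := {v : Σ_i V_-^{B_i}(v_{B_i}) ≤ Σ_{i=2}^{k} w_i (v_{τ_i} - v_{τ_i-1})} is contained in the tangent cone of K_-(V) := {z : V_-(z) ≤ V} at θ; i.e., for every v ∈ T(Π, w) there exists t > 0 such that θ + t v ∈ K_-(V). -/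
/-!
Split the lower variation of `θ + t • v` into the jumps inside the blocks of the partition and
the jumps across the `k - 1` block boundaries. Inside a block `θ` is constant, so these jumps
are exactly `t` times the lower variation of `v` on the block. At a boundary `θ` jumps by
`d ≠ 0`, and once `t` is so small that `t • v` cannot change the sign of `d`, the positive part
of the perturbed jump is `d₊ + t · w · (jump of v)`, linear in `t`. Hence the lower variation
of `θ + t • v` is `V` plus `t` times the slack of the inequality defining `T(Π, w)`, which is
nonpositive.
-/

open Finset Filter Topology

theorem Finset.sum_range_sub_one_eq_blocks_add_boundaries {M : Type*} [AddCommMonoid M]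
    {k : ℕ} {τ : ℕ → ℕ} (hτ0 : τ 0 = 0) (hτmono : ∀ i < k, τ i < τ (i + 1)) (f : ℕ → M) :
    ∑ j ∈ range (τ k - 1), f j =
      ∑ i ∈ range k, ∑ j ∈ Ico (τ i) (τ (i + 1) - 1), f j + ∑ i ∈ Ico 1 k, f (τ i - 1) := by
  induction k with
  | zero => simp [hτ0]
  | succ k ih =>
    have hstep := hτmono k k.lt_succ_self
    rw [sum_range_succ]
    rcases Nat.eq_zero_or_pos k with rfl | hk
    · simp only [sum_empty, Ico_self, zero_add, add_zero, hτ0, range_eq_Ico]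
    have hτk : 1 ≤ τ k := by
      have := hτmono (k - 1) (by omega)
      rw [Nat.sub_add_cancel hk] at this
      omega
    have hlast : ∑ j ∈ range (τ k), f j = ∑ j ∈ range (τ k - 1), f j + f (τ k - 1) := by
      rw [← sum_range_succ, Nat.sub_add_cancel hτk]
    rw [← sum_range_add_sum_Ico _ (by omega : τ k ≤ τ (k + 1) - 1), hlast,
      ih fun i hi => hτmono i (by omega), sum_Ico_succ_top hk]
    abel

section ConstantPartition

variable {k : ℕ} {τ : ℕ → ℕ} {θ : ℕ → ℝ}

theorem apply_succ_eq_of_mem_block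
    (hconst : ∀ i < k, ∀ a, τ i ≤ a → a < τ (i + 1) → θ a = θ (τ i))
    {i j : ℕ} (hi : i < k) (hj : j ∈ Ico (τ i) (τ (i + 1) - 1)) : θ (j + 1) = θ j := by
  rw [mem_Ico] at hj
  rw [hconst i hi (j + 1) (by omega) (by omega), hconst i hi j hj.1 (by omega)]

theorem pred_boundary_add_one_and_apply (hτmono : ∀ i < k, τ i < τ (i + 1))
    (hconst : ∀ i < k, ∀ a, τ i ≤ a → a < τ (i + 1) → θ a = θ (τ i))
    {i : ℕ} (hi : i ∈ Ico 1 k) : τ i - 1 + 1 = τ i ∧ θ (τ i - 1) = θ (τ (i - 1)) := by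
  rw [mem_Ico] at hi
  have hlt : τ (i - 1) < τ (i - 1 + 1) := hτmono (i - 1) (by omega)
  rw [Nat.sub_add_cancel hi.1] at hlt
  exact ⟨by omega, hconst (i - 1) (by omega) _ (by omega) (by rw [Nat.sub_add_cancel hi.1]; omega)⟩

end ConstantPartition

theorem max_add_sub_add_zero_eq_of_abs_sub_le {a b x y : ℝ} (h : |x - y| ≤ |a - b|) :
    max (a + x - (b + y)) 0 = max (a - b) 0 - (if a > b then 1 else 0) * (y - x) := by
  split_ifs with hab
  · rw [abs_of_pos (sub_pos.2 hab)] at h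
    have := (abs_le.1 h).1
    rw [max_eq_left, max_eq_left] <;> linarith
  · rw [abs_of_nonpos (sub_nonpos.2 (not_lt.1 hab))] at h
    have := (abs_le.1 h).2
    rw [max_eq_right, max_eq_right] <;> linarith

theorem exists_pos_abs_mul_le {ι : Type*} (s : Finset ι) (a b : ι → ℝ)
    (ha : ∀ i ∈ s, a i ≠ 0) : ∃ t > 0, ∀ i ∈ s, |t * b i| ≤ |a i| := by
  have hsmall : ∀ᶠ t in 𝓝[>] 0, ∀ i ∈ s, |t * b i| ≤ |a i| := by
    refine nhdsWithin_le_nhds ((eventually_all_finset s).2 fun i hi => ?_)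
    have hlim : Tendsto (fun t : ℝ => |t * b i|) (𝓝 0) (𝓝 0) := by
      simpa using ((continuous_id.mul continuous_const).abs.tendsto (0 : ℝ))
    exact hlim.eventually (ge_mem_nhds (abs_pos.2 (ha i hi)))
  exact (hsmall.and self_mem_nhdsWithin).exists.imp fun t ht => ⟨ht.2, ht.1⟩

theorem stmt_12_general (n k : ℕ) (θ : ℕ → ℝ) (V : ℝ)
    (hV : ∑ i ∈ Finset.range (n - 1), max (θ i - θ (i + 1)) 0 = V)
    (τ : ℕ → ℕ) (hτ0 : τ 0 = 0) (hτk : τ k = n) (hτmono : ∀ i < k, τ i < τ (i + 1))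
    (hconst : ∀ i < k, ∀ a, τ i ≤ a → a < τ (i + 1) → θ a = θ (τ i))
    (hdistinct : ∀ i, 1 ≤ i → i < k → θ (τ (i - 1)) ≠ θ (τ i))
    (w : ℕ → ℝ)
    (hwsgn : ∀ i, 1 ≤ i → i < k → w i = if θ (τ (i - 1)) > θ (τ i) then 1 else 0) :
    ∀ v : ℕ → ℝ,
      (∑ i ∈ Finset.range k,
          ∑ j ∈ Finset.Ico (τ i) (τ (i + 1) - 1), max (v j - v (j + 1)) 0
        ≤ ∑ i ∈ Finset.Ico 1 k, w i * (v (τ i) - v (τ i - 1))) →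
      ∃ t : ℝ, 0 < t ∧
        ∑ i ∈ Finset.range (n - 1),
            max ((θ i + t * v i) - (θ (i + 1) + t * v (i + 1))) 0 ≤ V := by
  intro v hv
  obtain ⟨t, ht, hsmall⟩ := exists_pos_abs_mul_le (Ico 1 k) (fun i => θ (τ (i - 1)) - θ (τ i))
    (fun i => v (τ i - 1) - v (τ i))
    fun i hi => sub_ne_zero.2 (hdistinct i (mem_Ico.1 hi).1 (mem_Ico.1 hi).2)
  refine ⟨t, ht, ?_⟩
  subst hτk
  rw [sum_range_sub_one_eq_blocks_add_boundaries hτ0 hτmono] at hV ⊢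
  have hVjumps : ∑ i ∈ Ico 1 k, max (θ (τ (i - 1)) - θ (τ i)) 0 = V := by
    rw [← hV, sum_eq_zero fun i hi => sum_eq_zero fun j hj => by
      rw [apply_succ_eq_of_mem_block hconst (mem_range.1 hi) hj, sub_self, max_self], zero_add]
    refine sum_congr rfl fun i hi => ?_
    obtain ⟨hsucc, hθ⟩ := pred_boundary_add_one_and_apply hτmono hconst hi
    rw [hsucc, hθ]
  calc _ = t * ∑ i ∈ range k, ∑ j ∈ Ico (τ i) (τ (i + 1) - 1), max (v j - v (j + 1)) 0 +
        ∑ i ∈ Ico 1 k, (max (θ (τ (i - 1)) - θ (τ i)) 0 - t * (w i * (v (τ i) - v (τ i - 1)))) := by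
        congr 1
        · simp only [mul_sum]
          refine sum_congr rfl fun i hi => sum_congr rfl fun j hj => ?_
          rw [apply_succ_eq_of_mem_block hconst (mem_range.1 hi) hj, mul_max_of_nonneg _ _ ht.le,
            mul_zero, mul_sub, add_sub_add_left_eq_sub]
        · refine sum_congr rfl fun i hi => ?_
          obtain ⟨hsucc, hθ⟩ := pred_boundary_add_one_and_apply hτmono hconst hi
          rw [hsucc, hθ, hwsgn i (mem_Ico.1 hi).1 (mem_Ico.1 hi).2,
            max_add_sub_add_zero_eq_of_abs_sub_le (by rw [← mul_sub]; exact hsmall i hi)]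
          ring
    _ ≤ V := by
        rw [sum_sub_distrib, ← mul_sum, hVjumps]
        linarith [mul_le_mul_of_nonneg_left hv ht.le]

/-- Let `θ ∈ ℝ^n` with `V₋(θ) = V`, and let `τ 0 = 0 < τ 1 < ⋯ < τ k = n` be
exactly the constant partition of `θ` (θ constant on each piece, adjacent
values distinct), with signs `w i = 1` if `θ (τ (i-1)) > θ (τ i)` and `w i = 0`
otherwise.  Then the cone
`T(Π, w) = {v : ∑ᵢ V₋^{B i}(v) ≤ ∑_{i=1}^{k-1} w i (v (τ i) - v (τ i - 1))}`
is contained in the tangent cone of `K₋(V) = {z : V₋(z) ≤ V}` at `θ`: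
for every `v ∈ T(Π, w)` there exists `t > 0` with `θ + t v ∈ K₋(V)`. -/
theorem stmt_12 (n k : ℕ) (hn : 1 ≤ n) (hk : 1 ≤ k) (θ : ℕ → ℝ) (V : ℝ)
    (hV : ∑ i ∈ Finset.range (n - 1), max (θ i - θ (i + 1)) 0 = V)
    (τ : ℕ → ℕ) (hτ0 : τ 0 = 0) (hτk : τ k = n) (hτmono : ∀ i < k, τ i < τ (i + 1))
    (hconst : ∀ i < k, ∀ a, τ i ≤ a → a < τ (i + 1) → θ a = θ (τ i))
    (hdistinct : ∀ i, 1 ≤ i → i < k → θ (τ (i - 1)) ≠ θ (τ i))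
    (w : ℕ → ℝ)
    (hwsgn : ∀ i, 1 ≤ i → i < k → w i = if θ (τ (i - 1)) > θ (τ i) then 1 else 0) :
    ∀ v : ℕ → ℝ,
      (∑ i ∈ Finset.range k,
          ∑ j ∈ Finset.Ico (τ i) (τ (i + 1) - 1), max (v j - v (j + 1)) 0
        ≤ ∑ i ∈ Finset.Ico 1 k, w i * (v (τ i) - v (τ i - 1))) →
      ∃ t : ℝ, 0 < t ∧
        ∑ i ∈ Finset.range (n - 1),
            max ((θ i + t * v i) - (θ (i + 1) + t * v (i + 1))) 0 ≤ V :=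
  stmt_12_general n k θ V hV τ hτ0 hτk hτmono hconst hdistinct w hwsgn
end

section
/- Let θ* ∈ ℝ^n with V_-(θ*) > 0, let V ≥ 0, set α := V / V_-(θ*), and define θ' ∈ ℝ^n by θ'_1 = θ*_1 and θ'_i = θ*_1 + Σ_{j=1}^{i-1}(θ*_{j+1} - θ*_j)_+ - α Σ_{j=1}^{i-1}(θ*_j - θ*_{j+1})_+ for i ≥ 2. Then V_-(θ') = α V_-(θ*) = V, and (1/n)‖θ' - θ*‖_2² ≤ (1-α)² (V_-(θ*))² = (V - V_-(θ*))². -/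
/-!
On the step from `i` to `i + 1`, `θ'` keeps every ascent of `θ*` and scales every descent by
`α ≥ 0`, so its descents are exactly `α` times those of `θ*` and `V₋(θ') = α V₋(θ*) = V`.
Since the ascents are kept, `θ' i - θ* i = (1 - α) ∑_{j<i} (θ* j - θ* (j+1))₊`, a partial sum of
`V₋(θ*)` scaled by `1 - α`; every square of the error, hence their mean, is therefore at most
`(1 - α)² V₋(θ*)²`.
-/

open Finset

/-- `V₋` of the vector `(θ 0, …, θ m)`. -/
def negVariation (θ : ℕ → ℝ) (m : ℕ) : ℝ :=
  ∑ i ∈ range m, max (θ i - θ (i + 1)) 0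

def shrinkDescents (θ : ℕ → ℝ) (α : ℝ) (i : ℕ) : ℝ :=
  θ 0 + (∑ j ∈ range i, max (θ (j + 1) - θ j) 0) - α * ∑ j ∈ range i, max (θ j - θ (j + 1)) 0

lemma max_sub_zero_sub_max_sub_zero (a b : ℝ) : max (a - b) 0 - max (b - a) 0 = a - b := by
  rcases le_total a b with h | h
  · rw [max_eq_right (by linarith), max_eq_left (by linarith)]; ring
  · rw [max_eq_left (by linarith), max_eq_right (by linarith)]; ring

lemma max_mul_max_sub_max_zero {α : ℝ} (hα : 0 ≤ α) (a b : ℝ) :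
    max (α * max (a - b) 0 - max (b - a) 0) 0 = α * max (a - b) 0 := by
  rcases le_total a b with h | h
  · rw [max_eq_right (by linarith : a - b ≤ 0), max_eq_left (by linarith : 0 ≤ b - a), mul_zero,
      max_eq_right (by linarith)]
  · rw [max_eq_left (by linarith : 0 ≤ a - b), max_eq_right (by linarith : b - a ≤ 0), sub_zero,
      max_eq_left (mul_nonneg hα (by linarith))]

lemma negVariation_nonneg (θ : ℕ → ℝ) (m : ℕ) : 0 ≤ negVariation θ m :=
  sum_nonneg fun _ _ => le_max_right _ _

lemma negVariation_mono (θ : ℕ → ℝ) : Monotone (negVariation θ) := fun _ _ hkm =>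
  sum_le_sum_of_subset_of_nonneg (range_subset_range.2 hkm) fun _ _ _ => le_max_right _ _

section shrinkDescents

variable (θ : ℕ → ℝ) {α : ℝ}

lemma shrinkDescents_sub_succ (i : ℕ) :
    shrinkDescents θ α i - shrinkDescents θ α (i + 1)
      = α * max (θ i - θ (i + 1)) 0 - max (θ (i + 1) - θ i) 0 := by
  simp only [shrinkDescents, sum_range_succ]
  ring

lemma negVariation_shrinkDescents (hα : 0 ≤ α) (m : ℕ) :
    negVariation (shrinkDescents θ α) m = α * negVariation θ m := by
  simp only [negVariation, mul_sum, shrinkDescents_sub_succ, max_mul_max_sub_max_zero hα]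

lemma shrinkDescents_sub_self (i : ℕ) :
    shrinkDescents θ α i - θ i = (1 - α) * negVariation θ i := by
  have htelescope : θ i - θ 0 = ∑ j ∈ range i, (θ (j + 1) - θ j) := (sum_range_sub θ i).symm
  rw [sum_congr rfl fun j _ => (max_sub_zero_sub_max_sub_zero (θ (j + 1)) (θ j)).symm,
    sum_sub_distrib] at htelescope
  rw [shrinkDescents, negVariation]
  linarith

lemma sq_shrinkDescents_sub_self_le {i m : ℕ} (him : i ≤ m) :
    (shrinkDescents θ α i - θ i) ^ 2 ≤ (1 - α) ^ 2 * negVariation θ m ^ 2 := by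
  rw [shrinkDescents_sub_self, mul_pow]
  gcongr
  · exact negVariation_nonneg θ i
  · exact negVariation_mono θ him

end shrinkDescents

lemma one_div_mul_sum_range_le {f : ℕ → ℝ} {M : ℝ} (hM : 0 ≤ M) {n : ℕ}
    (hf : ∀ i < n, f i ≤ M) : 1 / (n : ℝ) * ∑ i ∈ range n, f i ≤ M := by
  have hsum : ∑ i ∈ range n, f i ≤ M * n := by
    simpa [mul_comm] using sum_le_card_nsmul (range n) f M fun i hi => hf i (mem_range.1 hi)
  rw [one_div_mul_eq_div]
  exact div_le_of_le_mul₀ n.cast_nonneg hM hsum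

theorem stmt_16_general (n : ℕ) (θstar θ' : ℕ → ℝ) (V α : ℝ) (hV : 0 ≤ V)
    (hpos : 0 < ∑ i ∈ Finset.range (n - 1), max (θstar i - θstar (i + 1)) 0)
    (hα : α = V / ∑ i ∈ Finset.range (n - 1), max (θstar i - θstar (i + 1)) 0)
    (hθ' : ∀ i, θ' i = θstar 0
      + (∑ j ∈ Finset.range i, max (θstar (j + 1) - θstar j) 0)
      - α * ∑ j ∈ Finset.range i, max (θstar j - θstar (j + 1)) 0) :
    (∑ i ∈ Finset.range (n - 1), max (θ' i - θ' (i + 1)) 0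
        = α * ∑ i ∈ Finset.range (n - 1), max (θstar i - θstar (i + 1)) 0) ∧
    (∑ i ∈ Finset.range (n - 1), max (θ' i - θ' (i + 1)) 0 = V) ∧
    ((1 / (n : ℝ)) * ∑ i ∈ Finset.range n, (θ' i - θstar i) ^ 2
        ≤ (1 - α) ^ 2 * (∑ i ∈ Finset.range (n - 1), max (θstar i - θstar (i + 1)) 0) ^ 2) ∧
    ((1 - α) ^ 2 * (∑ i ∈ Finset.range (n - 1), max (θstar i - θstar (i + 1)) 0) ^ 2
        = (V - ∑ i ∈ Finset.range (n - 1), max (θstar i - θstar (i + 1)) 0) ^ 2) := by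
  obtain rfl : θ' = shrinkDescents θstar α := funext hθ'
  rw [← negVariation.eq_1 θstar] at hpos hα ⊢
  have hα_nonneg : 0 ≤ α := hα ▸ div_nonneg hV hpos.le
  have hαV : α * negVariation θstar (n - 1) = V := by rw [hα, div_mul_cancel₀ V hpos.ne']
  have hvar := negVariation_shrinkDescents θstar hα_nonneg (n - 1)
  refine ⟨hvar, hvar.trans hαV, ?_, by rw [← hαV]; ring⟩
  exact one_div_mul_sum_range_le (by positivity) fun i hi =>
    sq_shrinkDescents_sub_self_le θstar (by omega)

/-- Let `θ* ∈ ℝ^n` with `V₋(θ*) > 0`, let `V ≥ 0`, set `α = V / V₋(θ*)` and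
define `θ'` by `θ' i = θ* 0 + ∑_{j<i} (θ* (j+1) - θ* j)₊ - α ∑_{j<i} (θ* j - θ* (j+1))₊`.
Then `V₋(θ') = α V₋(θ*) = V` and
`(1/n) ‖θ' - θ*‖₂² ≤ (1-α)² V₋(θ*)² = (V - V₋(θ*))²`. -/
theorem stmt_16 (n : ℕ) (hn : 1 ≤ n) (θstar θ' : ℕ → ℝ) (V α : ℝ) (hV : 0 ≤ V)
    (hpos : 0 < ∑ i ∈ Finset.range (n - 1), max (θstar i - θstar (i + 1)) 0)
    (hα : α = V / ∑ i ∈ Finset.range (n - 1), max (θstar i - θstar (i + 1)) 0)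
    (hθ' : ∀ i, θ' i = θstar 0
      + (∑ j ∈ Finset.range i, max (θstar (j + 1) - θstar j) 0)
      - α * ∑ j ∈ Finset.range i, max (θstar j - θstar (j + 1)) 0) :
    (∑ i ∈ Finset.range (n - 1), max (θ' i - θ' (i + 1)) 0
        = α * ∑ i ∈ Finset.range (n - 1), max (θstar i - θstar (i + 1)) 0) ∧
    (∑ i ∈ Finset.range (n - 1), max (θ' i - θ' (i + 1)) 0 = V) ∧
    ((1 / (n : ℝ)) * ∑ i ∈ Finset.range n, (θ' i - θstar i) ^ 2
        ≤ (1 - α) ^ 2 * (∑ i ∈ Finset.range (n - 1), max (θstar i - θstar (i + 1)) 0) ^ 2) ∧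
    ((1 - α) ^ 2 * (∑ i ∈ Finset.range (n - 1), max (θstar i - θstar (i + 1)) 0) ^ 2
        = (V - ∑ i ∈ Finset.range (n - 1), max (θstar i - θstar (i + 1)) 0) ^ 2) :=
  stmt_16_general n θstar θ' V α hV hpos hα hθ'
end

section
/- Let θ ∈ ℝ^n be k-piecewise constant with constant partition (A_1, …, A_k) and associated signs w_1, …, w_{k+1} ∈ {0,1} (w_1 = w_{k+1} = 0, and for 2 ≤ i ≤ k, w_i = 1 iff the value on A_{i-1} exceeds the value on A_i). Define M(θ) := Σ_{j=2}^{k} max(1/|A_j|, k/n)·1_{{w_{j-1} ≠ w_j}}. If θ is m-piecewise monotone, then the number of sign changes Σ_{j=2}^{k} 1_{{w_{j-1} ≠ w_j}} is at most 2(m-1); consequently, if additionally every piece A_j with w_{j-1} ≠ w_j satisfies |A_j| ≥ c·n/k for some c > 0, then M(θ) ≤ 2 max(1, c^{-1})·(m-1)·k/n. -/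
/-!
A downward jump of `θ` at the start `τ i` of a constant piece cannot happen inside a
nondecreasing piece, so `τ i` is one of the `m - 1` interior breakpoints of the monotone
partition; as `τ` is injective there are at most `m - 1` downward jumps. Each sign change
`s j ≠ s (j + 1)` involves a downward jump at `j` or at `j + 1`, so there are at most
`2 (m - 1)` of them, and each contributes at most `max 1 c⁻¹ * k / n` to `M(θ)`.
-/

open Finset

lemma exists_le_lt_succ_of_le_of_lt {α : Type*} [LinearOrder α] {f : ℕ → α} {a : α}
    {m : ℕ} (h0 : f 0 ≤ a) (hm : a < f m) : ∃ l < m, f l ≤ a ∧ a < f (l + 1) := by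
  induction m with
  | zero => exact absurd hm h0.not_gt
  | succ m ih =>
    by_cases h : a < f m
    · obtain ⟨l, hlm, hla, hal⟩ := ih h
      exact ⟨l, by omega, hla, hal⟩
    · exact ⟨m, m.lt_succ_self, not_lt.1 h, hm⟩

lemma exists_breakpoint_eq_succ_of_lt {α : Type*} [Preorder α] {θ : ℕ → α} {σ : ℕ → ℕ}
    {m b : ℕ} (hmono : ∀ l < m, ∀ x y, σ l ≤ x → x ≤ y → y < σ (l + 1) → θ x ≤ θ y)
    (h0 : σ 0 ≤ b) (hm : b + 1 < σ m) (hdesc : θ (b + 1) < θ b) :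
    ∃ l ∈ Ioo 0 m, σ l = b + 1 := by
  obtain ⟨l, hlm, hlb, hbl⟩ := exists_le_lt_succ_of_le_of_lt h0 (by omega : b < σ m)
  have hσl : σ (l + 1) = b + 1 := by
    by_contra hne
    exact (hmono l hlm b (b + 1) hlb b.le_succ (by omega)).not_gt hdesc
  refine ⟨l + 1, mem_Ioo.2 ⟨l.succ_pos, ?_⟩, hσl⟩
  by_contra hge
  rw [show l + 1 = m by omega] at hσl
  omega

lemma exists_breakpoint_eq_of_jump_down {α : Type*} [Preorder α] {θ : ℕ → α}
    {τ σ : ℕ → ℕ} {k m : ℕ} (hτ : StrictMonoOn τ (Set.Iic k))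
    (hconst : ∀ i < k, ∀ a, τ i ≤ a → a < τ (i + 1) → θ a = θ (τ i))
    (hmono : ∀ l < m, ∀ x y, σ l ≤ x → x ≤ y → y < σ (l + 1) → θ x ≤ θ y)
    (hσ0 : σ 0 = 0) (hend : τ k ≤ σ m) {i : ℕ} (hi : i ∈ Ioo 0 k)
    (hdesc : θ (τ i) < θ (τ (i - 1))) : ∃ l ∈ Ioo 0 m, σ l = τ i := by
  obtain ⟨hi0, hik⟩ := mem_Ioo.1 hi
  have hprev : τ (i - 1) < τ i :=
    hτ (Set.mem_Iic.2 (by omega)) (Set.mem_Iic.2 hik.le) (by omega)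
  have hlast : τ i < τ k := hτ (Set.mem_Iic.2 hik.le) (Set.mem_Iic.2 le_rfl) hik
  have hbefore : θ (τ i - 1) = θ (τ (i - 1)) :=
    hconst (i - 1) (by omega) _ (by omega) (by rw [Nat.sub_add_cancel hi0]; omega)
  have hsucc : τ i - 1 + 1 = τ i := by omega
  simpa only [hsucc] using exists_breakpoint_eq_succ_of_lt hmono (b := τ i - 1)
    (by omega) (by omega) (by rwa [hsucc, hbefore])

lemma card_descents_le {α : Type*} [LinearOrder α] {θ : ℕ → α} {τ σ : ℕ → ℕ} {s : ℕ → ℕ}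
    {k m : ℕ} (hτ : ∀ i < k, τ i < τ (i + 1))
    (hconst : ∀ i < k, ∀ a, τ i ≤ a → a < τ (i + 1) → θ a = θ (τ i))
    (hs0 : s 0 = 0)
    (hsgn : ∀ i, 1 ≤ i → i < k → s i = if θ (τ (i - 1)) > θ (τ i) then 1 else 0)
    (hmono : ∀ l < m, ∀ x y, σ l ≤ x → x ≤ y → y < σ (l + 1) → θ x ≤ θ y)
    (hσ0 : σ 0 = 0) (hend : τ k ≤ σ m) :
    #{i ∈ range (k - 1 + 1) | s i ≠ 0} ≤ m - 1 := by
  set D : Finset ℕ := {i ∈ range (k - 1 + 1) | s i ≠ 0}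
  have hτ' : StrictMonoOn τ (Set.Iic k) := strictMonoOn_Iic_of_lt_succ hτ
  have hD : ∀ i ∈ D, i ∈ Ioo 0 k ∧ θ (τ i) < θ (τ (i - 1)) := by
    intro i hi
    obtain ⟨hik, hsi⟩ := mem_filter.1 hi
    have hi0 : i ≠ 0 := by rintro rfl; exact hsi hs0
    have hik' : i < k := by simp only [mem_range] at hik; omega
    refine ⟨mem_Ioo.2 ⟨Nat.pos_of_ne_zero hi0, hik'⟩, ?_⟩
    by_contra h
    exact hsi (by rw [hsgn i (by omega) hik', if_neg h])
  calc #D ≤ #((Ioo 0 m).image σ) := by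
        refine card_le_card_of_injOn τ (fun i hi => ?_) (hτ'.injOn.mono fun i hi => ?_)
        · obtain ⟨l, hl, hσl⟩ :=
            exists_breakpoint_eq_of_jump_down hτ' hconst hmono hσ0 hend (hD i hi).1 (hD i hi).2
          exact mem_image.2 ⟨l, hl, hσl⟩
        · exact Set.mem_Iic.2 (mem_Ioo.1 (hD i hi).1).2.le
    _ ≤ #(Ioo 0 m) := card_image_le
    _ = m - 1 := by simp

lemma card_filter_ne_succ_le_two_mul {α : Type*} [Zero α] [DecidableEq α] (s : ℕ → α)
    (N : ℕ) : #{j ∈ range N | s j ≠ s (j + 1)} ≤ 2 * #{i ∈ range (N + 1) | s i ≠ 0} := by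
  set O : Finset ℕ := {i ∈ range (N + 1) | s i ≠ 0}
  have hsub : {j ∈ range N | s j ≠ s (j + 1)} ⊆ O ∪ O.image (· - 1) := by
    intro j hj
    obtain ⟨hjN, hne⟩ := mem_filter.1 hj
    simp only [mem_range] at hjN
    by_cases hsj : s j = 0
    · refine mem_union_right _ (mem_image.2 ⟨j + 1, mem_filter.2 ⟨?_, ?_⟩, rfl⟩)
      · simp only [mem_range]; omega
      · rw [← hsj]; exact hne.symm
    · exact mem_union_left _ (mem_filter.2 ⟨by simp only [mem_range]; omega, hsj⟩)
  calc #{j ∈ range N | s j ≠ s (j + 1)} ≤ #(O ∪ O.image (· - 1)) := card_le_card hsub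
    _ ≤ #O + #(O.image (· - 1)) := card_union_le _ _
    _ ≤ 2 * #O := by have := card_image_le (s := O) (f := (· - 1)); omega

lemma max_one_div_le_max_one_inv_mul {a c x : ℝ} (hc : 0 < c) (hx : 0 < x)
    (ha : c / x ≤ a) : max (1 / a) x ≤ max 1 c⁻¹ * x := by
  refine max_le ?_ (le_mul_of_one_le_left hx.le (le_max_left _ _))
  calc 1 / a ≤ 1 / (c / x) := one_div_le_one_div_of_le (by positivity) ha
    _ = c⁻¹ * x := by rw [one_div_div, div_eq_inv_mul]
    _ ≤ max 1 c⁻¹ * x := mul_le_mul_of_nonneg_right (le_max_right _ _) hx.le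

theorem stmt_19_general (n k m : ℕ) (hn : 1 ≤ n)
    (θ : ℕ → ℝ) (τ : ℕ → ℕ)
    (hτk : τ k = n) (hτmono : ∀ i < k, τ i < τ (i + 1))
    (hconst : ∀ i < k, ∀ a, τ i ≤ a → a < τ (i + 1) → θ a = θ (τ i))
    (s : ℕ → ℕ) (hs0 : s 0 = 0)
    (hsgn : ∀ i, 1 ≤ i → i < k → s i = if θ (τ (i - 1)) > θ (τ i) then 1 else 0)
    (σp : ℕ → ℕ) (hσ0 : σp 0 = 0) (hσm : σp m = n)
    (hσmonotone : ∀ i < m, ∀ a b, σp i ≤ a → a ≤ b → b < σp (i + 1) → θ a ≤ θ b) :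
    ((Finset.range (k - 1)).filter (fun j => s j ≠ s (j + 1))).card ≤ 2 * (m - 1) ∧
    ∀ c : ℝ, 0 < c →
      (∀ j ∈ Finset.range (k - 1), s j ≠ s (j + 1) →
        c * n / k ≤ ((τ (j + 2) - τ (j + 1) : ℕ) : ℝ)) →
      (∑ j ∈ Finset.range (k - 1),
          if s j ≠ s (j + 1) then
            max (1 / ((τ (j + 2) - τ (j + 1) : ℕ) : ℝ)) ((k : ℝ) / n) else 0)
        ≤ 2 * max 1 c⁻¹ * ((m - 1 : ℕ) : ℝ) * k / n := by
  have hchanges : #{j ∈ range (k - 1) | s j ≠ s (j + 1)} ≤ 2 * (m - 1) :=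
    (card_filter_ne_succ_le_two_mul s (k - 1)).trans <| Nat.mul_le_mul_left 2 <|
      card_descents_le hτmono hconst hs0 hsgn hσmonotone hσ0 (hτk.trans hσm.symm).le
  refine ⟨hchanges, fun c hc hA => ?_⟩
  rw [← sum_filter]
  calc _ ≤ #{j ∈ range (k - 1) | s j ≠ s (j + 1)} • (max 1 c⁻¹ * ((k : ℝ) / n)) := by
        refine sum_le_card_nsmul _ _ _ fun j hj => ?_
        obtain ⟨hjk, hsj⟩ := mem_filter.1 hj
        have hkn : (0 : ℝ) < k / n := by
          have : 0 < k := by simp only [mem_range] at hjk; omega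
          positivity
        refine max_one_div_le_max_one_inv_mul hc hkn ?_
        rw [div_div_eq_mul_div]
        exact hA j hjk hsj
    _ ≤ ((2 * (m - 1) : ℕ) : ℝ) * (max 1 c⁻¹ * ((k : ℝ) / n)) := by
        rw [nsmul_eq_mul]
        gcongr
    _ = 2 * max 1 c⁻¹ * ((m - 1 : ℕ) : ℝ) * k / n := by push_cast; ring

/-- Let `θ ∈ ℝ^n` be `k`-piecewise constant with constant partition given by
breakpoints `τ 0 = 0 < ⋯ < τ k = n` (values distinct on adjacent pieces), with
signs `s 0 = s k = 0` and, for `1 ≤ i < k`, `s i = 1` iff the value on piece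
`i-1` exceeds the value on piece `i`.  If `θ` is `m`-piecewise monotone (via
breakpoints `σp`), then the number of sign changes is at most `2(m-1)`;
consequently if every piece `A j` at a sign change has `|A j| ≥ c n / k` for
some `c > 0`, then
`M(θ) = ∑ max(1/|A j|, k/n) 1{sign change} ≤ 2 max(1, c⁻¹) (m-1) k / n`. -/
theorem stmt_19 (n k m : ℕ) (hn : 1 ≤ n) (hk : 1 ≤ k) (hm : 1 ≤ m)
    (θ : ℕ → ℝ) (τ : ℕ → ℕ)
    (hτ0 : τ 0 = 0) (hτk : τ k = n) (hτmono : ∀ i < k, τ i < τ (i + 1))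
    (hconst : ∀ i < k, ∀ a, τ i ≤ a → a < τ (i + 1) → θ a = θ (τ i))
    (hdistinct : ∀ i, 1 ≤ i → i < k → θ (τ (i - 1)) ≠ θ (τ i))
    (s : ℕ → ℕ) (hs0 : s 0 = 0) (hsk : s k = 0)
    (hsgn : ∀ i, 1 ≤ i → i < k → s i = if θ (τ (i - 1)) > θ (τ i) then 1 else 0)
    (σp : ℕ → ℕ) (hσ0 : σp 0 = 0) (hσm : σp m = n) (hσmono : ∀ i < m, σp i < σp (i + 1))
    (hσmonotone : ∀ i < m, ∀ a b, σp i ≤ a → a ≤ b → b < σp (i + 1) → θ a ≤ θ b) :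
    ((Finset.range (k - 1)).filter (fun j => s j ≠ s (j + 1))).card ≤ 2 * (m - 1) ∧
    ∀ c : ℝ, 0 < c →
      (∀ j ∈ Finset.range (k - 1), s j ≠ s (j + 1) →
        c * n / k ≤ ((τ (j + 2) - τ (j + 1) : ℕ) : ℝ)) →
      (∑ j ∈ Finset.range (k - 1),
          if s j ≠ s (j + 1) then
            max (1 / ((τ (j + 2) - τ (j + 1) : ℕ) : ℝ)) ((k : ℝ) / n) else 0)
        ≤ 2 * max 1 c⁻¹ * ((m - 1 : ℕ) : ℝ) * k / n :=
  stmt_19_general n k m hn θ τ hτk hτmono hconst s hs0 hsgn σp hσ0 hσm hσmonotone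
end
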